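/- Let P be a finite index set partitioned into sets 𝔰 and 𝔲 (the indices of the stable and unstable subsystems), let (A_p)_{p∈P} be n×n real matrices and (R_{(p,q)})_{p,q∈P} reset matrices. Suppose there exist symmetric positive definite matrices (Q_p)_{p∈P} and positive constants λ_p (p ∈ 𝔰), μ_p (p ∈ 𝔲), and γ_{(q,p)} (p,q ∈ P) such that Q_p·A_p + A_pᵀ·Q_p ⪯ −λ_p·Q_p for all p ∈ 𝔰, Q_p·A_p + A_pᵀ·Q_p ⪯ μ_p·Q_p for all p ∈ 𝔲, and R_{(q,p)}ᵀ·Q_p·R_{(q,p)} ⪯ γ_{(q,p)}·Q_q for all p, q ∈ P. Set γ = max_{p,q∈P} γ_{(q,p)}. Let (τ_p)_{p∈𝔰} and (η_p)_{p∈𝔲} be positive constants, let p : ℕ → P be an infinite switching sequence and d_1, d_2, … positive durations with d_k ≥ τ_{p_{k−1}} whenever p_{k−1} ∈ 𝔰 and d_k ≤ η_{p_{k−1}} whenever p_{k−1} ∈ 𝔲, and for each p ∈ P set N^p(j) = #{0 ≤ i < j : p_i = p}. If limsup_{j→∞} ( −Σ_{p∈𝔰} λ_p·N^p(j)·τ_p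 + Σ_{p∈𝔲} μ_p·N^p(j)·η_p + j·ln γ ) < 0, then there exists C > 0 such that ‖exp(s·A_{p_j})·Φ_j‖ ≤ C for every j ≥ 0 and every s with 0 ≤ s ≤ d_{j+1}; that is, the reset switched system is stable along this switching signal with mode-dependent dwell times (τ_p)_{p∈𝔰} and mode-dependent flee times (η_p)_{p∈𝔲}. -/

import Mathlib

open Matrix NormedSpace
open scoped Matrix.Norms.L2Operator

noncomputable section

/-- A real square matrix is Hurwitz stable if every eigenvalue of it, regarded as a
complex matrix, has negative real part. -/
def HurwitzStable {n : ℕ} (A : Matrix (Fin n) (Fin n) ℝ) : Prop :=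
  ∀ μ ∈ spectrum ℂ (A.map (Complex.ofReal ·)), μ.re < 0

/-- A real square matrix is unstable if some eigenvalue of it, regarded as a
complex matrix, has positive real part. -/
def HasUnstableEigenvalue {n : ℕ} (A : Matrix (Fin n) (Fin n) ℝ) : Prop :=
  ∃ μ ∈ spectrum ℂ (A.map (Complex.ofReal ·)), 0 < μ.re

/-- The transition matrix `Φ_j` of the reset switched system: for the switching sequence
`p 0, p 1, …`, durations `d 1, d 2, …` and reset matrices `R`, it is
`Φ_j = R_{(p_{j−1},p_j)} exp(d_j A_{p_{j−1}}) ⋯ R_{(p_0,p_1)} exp(d_1 A_{p_0})`, `Φ_0 = 1`. -/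
def resetTransition {n : ℕ} {P : Type*} (A : P → Matrix (Fin n) (Fin n) ℝ)
    (R : P → P → Matrix (Fin n) (Fin n) ℝ) (p : ℕ → P) (d : ℕ → ℝ) :
    ℕ → Matrix (Fin n) (Fin n) ℝ
  | 0 => 1
  | j + 1 => R (p j) (p (j + 1)) * exp (d (j + 1) • A (p j)) * resetTransition A R p d j

/-- The transition matrix `Ψ_j` of the impulsive switched system: for the switching sequence
`p 0, p 1, …`, durations `d 1, d 2, …` and impulse matrices `M 1, M 2, …`, it is
`Ψ_j = M_j exp(d_j A_{p_{j−1}}) ⋯ M_1 exp(d_1 A_{p_0})`, `Ψ_0 = 1`. -/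
def impulsiveTransition {n : ℕ} {P : Type*} (A : P → Matrix (Fin n) (Fin n) ℝ)
    (M : ℕ → Matrix (Fin n) (Fin n) ℝ) (p : ℕ → P) (d : ℕ → ℝ) :
    ℕ → Matrix (Fin n) (Fin n) ℝ
  | 0 => 1
  | j + 1 => M (j + 1) * exp (d (j + 1) • A (p j)) * impulsiveTransition A M p d j

/-!
Each `V_q(x) = xᵀ Q_q x` grows along the flow of `A_q` at most like `e^{c_q t}` (Grönwall), with
`c_q = -λ_q` on stable and `c_q = μ_q` on unstable modes, and a reset multiplies it by at most `γ`.
The dwell-time and flee-time constraints bound the exponent of the `k`-th interval by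
`-λ_q τ_q` resp. `μ_q η_q`, so `V_{p_j}(Φ_j x) ≤ e^{G(j)} V_{p_0}(x)`, where `G(j)` is exactly the
quantity under the `limsup`; a negative `limsup` makes `G` bounded above. Inside an interval the
extra growth is bounded by a constant, and finitely many positive definite `Q_q` make all `V_q`
uniformly equivalent to `|x|²`, which turns the bound on `V` into a bound on the operator norm.
-/

theorem EuclideanSpace.norm_toLp_sq_eq_dotProduct {ι : Type*} [Fintype ι] (x : ι → ℝ) :
    ‖WithLp.toLp 2 x‖ ^ 2 = x ⬝ᵥ x := by
  rw [EuclideanSpace.real_norm_sq_eq]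
  simp [dotProduct, sq]

namespace Matrix

variable {ι : Type*} [Fintype ι]

theorem dotProduct_mulVec_le_of_posSemidef_smul_sub {Q M : Matrix ι ι ℝ} {c : ℝ}
    (h : (c • Q - M).PosSemidef) (x : ι → ℝ) : x ⬝ᵥ M *ᵥ x ≤ c * (x ⬝ᵥ Q *ᵥ x) := by
  have := h.dotProduct_mulVec_nonneg x
  simp only [star_trivial, sub_mulVec, smul_mulVec, dotProduct_sub, dotProduct_smul,
    smul_eq_mul] at this
  linarith

theorem dotProduct_transpose_mul_mul_mulVec (B M : Matrix ι ι ℝ) (x : ι → ℝ) :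
    x ⬝ᵥ (Bᵀ * M * B) *ᵥ x = (B *ᵥ x) ⬝ᵥ M *ᵥ (B *ᵥ x) := by
  rw [← mulVec_mulVec, ← mulVec_mulVec, dotProduct_mulVec, vecMul_transpose]

open scoped MatrixOrder in
theorem PosDef.exists_pos_mul_dotProduct_le {Q : Matrix ι ι ℝ} (hQ : Q.PosDef) :
    ∃ a > 0, ∀ x : ι → ℝ, a * (x ⬝ᵥ x) ≤ x ⬝ᵥ Q *ᵥ x := by
  classical
  cases isEmpty_or_nonempty ι
  · exact ⟨1, one_pos, fun x => by simp [dotProduct, Subsingleton.elim x 0]⟩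
  obtain ⟨a, ha, haQ⟩ := (CFC.exists_pos_algebraMap_le_iff hQ.isHermitian).2
    fun r hr => (isStrictlyPositive_iff_posDef.2 hQ).spectrum_pos hr
  refine ⟨a, ha, fun x => ?_⟩
  have := (Matrix.le_iff.1 haQ).dotProduct_mulVec_nonneg x
  simp only [Algebra.algebraMap_eq_smul_one, star_trivial, sub_mulVec, smul_mulVec, one_mulVec,
    dotProduct_sub, dotProduct_smul, smul_eq_mul] at this
  linarith

theorem exists_pos_forall_mul_dotProduct_le {P : Type*} [Finite P] {Q : P → Matrix ι ι ℝ}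
    (hQ : ∀ q, (Q q).PosDef) : ∃ a > 0, ∀ q x, a * (x ⬝ᵥ x) ≤ x ⬝ᵥ Q q *ᵥ x := by
  cases isEmpty_or_nonempty P
  · exact ⟨1, one_pos, fun q => isEmptyElim q⟩
  choose a ha hQa using fun q => (hQ q).exists_pos_mul_dotProduct_le
  obtain ⟨q₀, hq₀⟩ := Finite.exists_min a
  refine ⟨a q₀, ha q₀, fun q x => le_trans ?_ (hQa q x)⟩
  exact mul_le_mul_of_nonneg_right (hq₀ q) (by simpa using dotProduct_star_self_nonneg x)

variable [DecidableEq ι]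

theorem dotProduct_mulVec_le_l2_opNorm_mul (Q : Matrix ι ι ℝ) (x : ι → ℝ) :
    x ⬝ᵥ Q *ᵥ x ≤ ‖Q‖ * (x ⬝ᵥ x) := by
  have hinner : x ⬝ᵥ Q *ᵥ x = inner ℝ (WithLp.toLp 2 x) (WithLp.toLp 2 (Q *ᵥ x)) := by
    rw [EuclideanSpace.inner_toLp_toLp, star_trivial, dotProduct_comm]
  calc x ⬝ᵥ Q *ᵥ x ≤ ‖WithLp.toLp 2 x‖ * ‖WithLp.toLp 2 (Q *ᵥ x)‖ :=
        hinner ▸ real_inner_le_norm _ _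
    _ ≤ ‖WithLp.toLp 2 x‖ * (‖Q‖ * ‖WithLp.toLp 2 x‖) :=
        mul_le_mul_of_nonneg_left (Q.l2_opNorm_mulVec _) (norm_nonneg _)
    _ = ‖Q‖ * (x ⬝ᵥ x) := by rw [← EuclideanSpace.norm_toLp_sq_eq_dotProduct]; ring

theorem l2_opNorm_le_of_dotProduct_le {M : Matrix ι ι ℝ} {C : ℝ} (hC : 0 ≤ C)
    (h : ∀ x, (M *ᵥ x) ⬝ᵥ (M *ᵥ x) ≤ C ^ 2 * (x ⬝ᵥ x)) : ‖M‖ ≤ C := by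
  rw [l2_opNorm_def]
  refine ContinuousLinearMap.opNorm_le_bound _ hC fun x => ?_
  refine le_of_sq_le_sq ?_ (by positivity)
  have hx : ‖x‖ ^ 2 = x.ofLp ⬝ᵥ x.ofLp := by
    rw [← EuclideanSpace.norm_toLp_sq_eq_dotProduct, WithLp.toLp_ofLp]
  simpa [mul_pow, hx, toLpLin_apply, EuclideanSpace.norm_toLp_sq_eq_dotProduct] using h x.ofLp

theorem l2_opNorm_le_sqrt_of_dotProduct_mulVec_le {Q M : Matrix ι ι ℝ} {a K : ℝ} (ha : 0 < a)
    (hQ : ∀ y, a * (y ⬝ᵥ y) ≤ y ⬝ᵥ Q *ᵥ y) (hK : 0 ≤ K)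
    (h : ∀ x, (M *ᵥ x) ⬝ᵥ Q *ᵥ (M *ᵥ x) ≤ K * (x ⬝ᵥ x)) : ‖M‖ ≤ √(K / a) := by
  refine l2_opNorm_le_of_dotProduct_le (Real.sqrt_nonneg _) fun x => ?_
  rw [Real.sq_sqrt (div_nonneg hK ha.le), div_mul_eq_mul_div, le_div_iff₀' ha]
  exact (hQ _).trans (h x)

theorem dotProduct_exp_smul_mulVec_le {Q A : Matrix ι ι ℝ} {c : ℝ}
    (h : (c • Q - (Q * A + Aᵀ * Q)).PosSemidef) (x : ι → ℝ) {t : ℝ} (ht : 0 ≤ t) :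
    (exp (t • A) *ᵥ x) ⬝ᵥ Q *ᵥ (exp (t • A) *ᵥ x) ≤ Real.exp (c * t) * (x ⬝ᵥ Q *ᵥ x) := by
  let quadAt : Matrix ι ι ℝ →L[ℝ] ℝ := LinearMap.toContinuousLinearMap
    { toFun := fun M => x ⬝ᵥ M *ᵥ x
      map_add' := fun M N => by simp [add_mulVec]
      map_smul' := fun r M => by simp [smul_mulVec] }
  let f : ℝ → ℝ := fun u => quadAt (exp (u • Aᵀ) * Q * exp (u • A))
  have hexp_transpose : ∀ u : ℝ, exp (u • Aᵀ) = (exp (u • A))ᵀ := fun u => by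
    rw [← transpose_smul, exp_transpose]
  have hf_eq : ∀ u, f u = (exp (u • A) *ᵥ x) ⬝ᵥ Q *ᵥ (exp (u • A) *ᵥ x) := fun u => by
    rw [← dotProduct_transpose_mul_mul_mulVec, ← hexp_transpose]; rfl
  have hf' : ∀ u, HasDerivAt f
      (quadAt (exp (u • Aᵀ) * (Q * A + Aᵀ * Q) * exp (u • A))) u := fun u => by
    have hF := ((hasDerivAt_exp_smul_const (𝕂 := ℝ) Aᵀ u).mul_const Q).mul
      (hasDerivAt_exp_smul_const' (𝕂 := ℝ) A u)
    refine (quadAt.hasFDerivAt.comp_hasDerivAt u hF).congr_deriv ?_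
    congr 1
    noncomm_ring
  have hbound : ∀ u, quadAt (exp (u • Aᵀ) * (Q * A + Aᵀ * Q) * exp (u • A)) ≤ c * f u + 0 :=
    fun u => by
      rw [add_zero, hf_eq, hexp_transpose]
      change x ⬝ᵥ _ *ᵥ x ≤ _
      rw [dotProduct_transpose_mul_mul_mulVec]
      exact dotProduct_mulVec_le_of_posSemidef_smul_sub h _
  have hgronwall := le_gronwallBound_of_liminf_deriv_right_le (a := 0) (b := t)
    (fun u _ => (hf' u).continuousAt.continuousWithinAt)
    (fun u _ _ hr => (hf' u).hasDerivWithinAt.liminf_right_slope_le hr) le_rfl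
    (fun u _ => hbound u) t ⟨ht, le_rfl⟩
  rw [gronwallBound_ε0, sub_zero, hf_eq, hf_eq, zero_smul, exp_zero, one_mulVec] at hgronwall
  linarith

end Matrix

open Finset in
theorem sum_mul_card_filter_eq_sum_range {R P : Type*} [Semiring R] [DecidableEq P]
    (T : Finset P) (f : P → R) (p : ℕ → P) (j : ℕ) :
    ∑ q ∈ T, f q * (((range j).filter fun i => p i = q).card : R) =
      ∑ i ∈ range j, if p i ∈ T then f (p i) else 0 := by
  simp_rw [card_filter, Nat.cast_sum, mul_sum]
  rw [sum_comm]
  simp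

open Finset in
theorem neg_sum_add_sum_mul_card_filter_eq {R P : Type*} [Ring R] [Fintype P] [DecidableEq P]
    {S U : Finset P} (hSU : S ∪ U = univ) (hdisj : Disjoint S U) (f g : P → R) (p : ℕ → P)
    (j : ℕ) :
    -(∑ q ∈ S, f q * (((range j).filter fun i => p i = q).card : R)) +
        ∑ q ∈ U, g q * (((range j).filter fun i => p i = q).card : R) =
      ∑ i ∈ range j, if p i ∈ S then -f (p i) else g (p i) := by
  rw [sum_mul_card_filter_eq_sum_range, sum_mul_card_filter_eq_sum_range, ← sum_neg_distrib,
    ← sum_add_distrib]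
  refine sum_congr rfl fun i _ => ?_
  by_cases hS : p i ∈ S
  · simp [hS, disjoint_left.1 hdisj hS]
  · have hU : p i ∈ U := (mem_union.1 (hSU ▸ mem_univ (p i))).resolve_left hS
    simp [hS, hU]

theorem Real.bddAbove_range_of_limsup_neg {u : ℕ → ℝ} (h : Filter.limsup u Filter.atTop < 0) :
    BddAbove (Set.range u) := by
  -- in `ℝ`, the `limsup` of a sequence that is not bounded above is the junk value `0`
  refine Filter.IsBoundedUnder.bddAbove_range (by_contra fun hu => ?_)
  rw [Real.limsup_of_not_isBoundedUnder hu] at h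
  exact h.false

section ResetSwitchedSystem

variable {n : ℕ} {P : Type*} (A : P → Matrix (Fin n) (Fin n) ℝ)
  (R : P → P → Matrix (Fin n) (Fin n) ℝ) (p : ℕ → P) (d : ℕ → ℝ) (Q : P → Matrix (Fin n) (Fin n) ℝ)

theorem dotProduct_resetTransition_le_exp_sum (w : ℕ → ℝ)
    (hstep : ∀ j y, (R (p j) (p (j + 1)) *ᵥ (exp (d (j + 1) • A (p j)) *ᵥ y)) ⬝ᵥ
        Q (p (j + 1)) *ᵥ (R (p j) (p (j + 1)) *ᵥ (exp (d (j + 1) • A (p j)) *ᵥ y)) ≤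
          Real.exp (w j) * (y ⬝ᵥ Q (p j) *ᵥ y))
    (j : ℕ) (x : Fin n → ℝ) :
    (resetTransition A R p d j *ᵥ x) ⬝ᵥ Q (p j) *ᵥ (resetTransition A R p d j *ᵥ x) ≤
      Real.exp (∑ i ∈ Finset.range j, w i) * (x ⬝ᵥ Q (p 0) *ᵥ x) := by
  induction j with
  | zero => simp [resetTransition]
  | succ j ih =>
    simp only [resetTransition, ← mulVec_mulVec, Finset.sum_range_succ, Real.exp_add]
    calc _ ≤ Real.exp (w j) * ((resetTransition A R p d j *ᵥ x) ⬝ᵥ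
          Q (p j) *ᵥ (resetTransition A R p d j *ᵥ x)) := hstep j _
      _ ≤ Real.exp (w j) * (Real.exp (∑ i ∈ Finset.range j, w i) * (x ⬝ᵥ Q (p 0) *ᵥ x)) :=
          mul_le_mul_of_nonneg_left ih (Real.exp_pos _).le
      _ = _ := by ring

theorem exists_norm_exp_smul_mul_resetTransition_le_of_budget [Finite P]
    (hQ : ∀ q, (Q q).PosDef) (c b : P → ℝ)
    (hA : ∀ q, (c q • Q q - (Q q * A q + (A q)ᵀ * Q q)).PosSemidef)
    (g : P → P → ℝ) (hR : ∀ q q', (g q q' • Q q - (R q q')ᵀ * Q q' * R q q').PosSemidef)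
    {γ : ℝ} (hγ : 0 < γ) (hgγ : ∀ q q', g q q' ≤ γ)
    (hd : ∀ j, 0 ≤ d (j + 1)) (hb : ∀ j, c (p j) * d (j + 1) ≤ b (p j))
    (hbdd : BddAbove (Set.range fun j => ∑ i ∈ Finset.range j, (b (p i) + Real.log γ))) :
    ∃ C > (0 : ℝ), ∀ (j : ℕ) (s : ℝ), 0 ≤ s → s ≤ d (j + 1) →
      ‖exp (s • A (p j)) * resetTransition A R p d j‖ ≤ C := by
  have hQ_nonneg : ∀ q x, 0 ≤ x ⬝ᵥ Q q *ᵥ x := fun q x => by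
    simpa using (hQ q).posSemidef.dotProduct_mulVec_nonneg x
  have hstep : ∀ j y, (R (p j) (p (j + 1)) *ᵥ (exp (d (j + 1) • A (p j)) *ᵥ y)) ⬝ᵥ
      Q (p (j + 1)) *ᵥ (R (p j) (p (j + 1)) *ᵥ (exp (d (j + 1) • A (p j)) *ᵥ y)) ≤
        Real.exp (b (p j) + Real.log γ) * (y ⬝ᵥ Q (p j) *ᵥ y) := fun j y => by
    set z := exp (d (j + 1) • A (p j)) *ᵥ y
    calc _ ≤ g (p j) (p (j + 1)) * (z ⬝ᵥ Q (p j) *ᵥ z) := by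
          rw [← dotProduct_transpose_mul_mul_mulVec]
          exact dotProduct_mulVec_le_of_posSemidef_smul_sub (hR _ _) z
      _ ≤ γ * (Real.exp (c (p j) * d (j + 1)) * (y ⬝ᵥ Q (p j) *ᵥ y)) :=
          mul_le_mul (hgγ _ _) (dotProduct_exp_smul_mulVec_le (hA _) y (hd j)) (hQ_nonneg _ _)
            hγ.le
      _ ≤ γ * (Real.exp (b (p j)) * (y ⬝ᵥ Q (p j) *ᵥ y)) := by
          gcongr
          · exact hQ_nonneg _ _
          · exact hb j
      _ = _ := by rw [Real.exp_add, Real.exp_log hγ]; ring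
  obtain ⟨M, hM⟩ := hbdd
  obtain ⟨K, hK⟩ := Finite.exists_le fun q => max 0 (b q)
  obtain ⟨a, ha, hQa⟩ := exists_pos_forall_mul_dotProduct_le hQ
  refine ⟨√(Real.exp (K + M) * ‖Q (p 0)‖ / a) + 1, by positivity, fun j s hs hsd => ?_⟩
  refine le_add_of_le_of_nonneg ?_ zero_le_one
  refine l2_opNorm_le_sqrt_of_dotProduct_mulVec_le ha (hQa (p j)) (by positivity) fun x => ?_
  have hcs : c (p j) * s ≤ K := by
    -- `s ↦ c s` is linear, so on `[0, d]` it stays below `max 0 (c d)`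
    refine le_trans ?_ ((max_le_max_left 0 (hb j)).trans (hK (p j)))
    rcases le_total 0 (c (p j)) with hc | hc
    · exact le_max_of_le_right (mul_le_mul_of_nonneg_left hsd hc)
    · exact le_max_of_le_left (mul_nonpos_of_nonpos_of_nonneg hc hs)
  have hΦ := dotProduct_resetTransition_le_exp_sum A R p d Q _ hstep j x
  rw [← mulVec_mulVec]
  calc _ ≤ Real.exp (c (p j) * s) * ((resetTransition A R p d j *ᵥ x) ⬝ᵥ
        Q (p j) *ᵥ (resetTransition A R p d j *ᵥ x)) := dotProduct_exp_smul_mulVec_le (hA _) _ hs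
    _ ≤ Real.exp K * (Real.exp M * (‖Q (p 0)‖ * (x ⬝ᵥ x))) := by
        gcongr
        · exact hQ_nonneg _ _
        · exact hΦ.trans (mul_le_mul (Real.exp_le_exp.2 (hM ⟨j, rfl⟩))
            (dotProduct_mulVec_le_l2_opNorm_mul _ _) (hQ_nonneg _ _) (Real.exp_pos _).le)
    _ = Real.exp (K + M) * ‖Q (p 0)‖ * (x ⬝ᵥ x) := by rw [Real.exp_add]; ring

end ResetSwitchedSystem

theorem reset_system_stable_of_MLF_mode_dependent_mixed_general {n : ℕ} {P : Type*}
    [Fintype P] [DecidableEq P]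
    (S U : Finset P) (hSU : S ∪ U = Finset.univ) (hdisj : Disjoint S U)
    (A : P → Matrix (Fin n) (Fin n) ℝ)
    (R : P → P → Matrix (Fin n) (Fin n) ℝ)
    (Q : P → Matrix (Fin n) (Fin n) ℝ) (hQ : ∀ p, (Q p).PosDef)
    (lamf muf : P → ℝ) (γf : P → P → ℝ)
    (hlamf : ∀ p ∈ S, 0 < lamf p) (hmuf : ∀ p ∈ U, 0 < muf p)
    (hγf : ∀ p q, 0 < γf p q)
    (hQA_s : ∀ p ∈ S, ((-(lamf p)) • Q p - (Q p * A p + (A p)ᵀ * Q p)).PosSemidef)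
    (hQA_u : ∀ p ∈ U, ((muf p) • Q p - (Q p * A p + (A p)ᵀ * Q p)).PosSemidef)
    (hR : ∀ p q, (γf q p • Q q - (R q p)ᵀ * Q p * R q p).PosSemidef)
    (γ : ℝ)
    (hγ_ub : ∀ p q, γf q p ≤ γ)
    (τf ηf : P → ℝ)
    (p : ℕ → P) (d : ℕ → ℝ)
    (hd : ∀ k, 1 ≤ k → 0 < d k)
    (hdS : ∀ k, 1 ≤ k → p (k - 1) ∈ S → τf (p (k - 1)) ≤ d k)
    (hdU : ∀ k, 1 ≤ k → p (k - 1) ∈ U → d k ≤ ηf (p (k - 1)))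
    (hlimsup : Filter.limsup (fun j : ℕ =>
        -(∑ q ∈ S, lamf q * (((Finset.range j).filter fun i => p i = q).card : ℝ) * τf q) +
          (∑ q ∈ U, muf q * (((Finset.range j).filter fun i => p i = q).card : ℝ) * ηf q) +
          (j : ℝ) * Real.log γ) Filter.atTop < 0) :
    ∃ C > (0 : ℝ), ∀ (j : ℕ) (s : ℝ), 0 ≤ s → s ≤ d (j + 1) →
      ‖exp (s • A (p j)) * resetTransition A R p d j‖ ≤ C := by
  set c : P → ℝ := fun q => if q ∈ S then -lamf q else muf q
  set b : P → ℝ := fun q => if q ∈ S then -(lamf q * τf q) else muf q * ηf q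
  have hU_of_notMem_S : ∀ q ∉ S, q ∈ U := fun q hq =>
    (Finset.mem_union.1 (hSU ▸ Finset.mem_univ q)).resolve_left hq
  have hγ : 0 < γ := (hγf (p 0) (p 0)).trans_le (hγ_ub (p 0) (p 0))
  refine exists_norm_exp_smul_mul_resetTransition_le_of_budget A R p d Q hQ c b ?_ γf
    (fun q q' => hR q' q) hγ (fun q q' => hγ_ub q' q) (fun j => (hd (j + 1) j.succ_pos).le) ?_ ?_
  · intro q
    by_cases hq : q ∈ S
    · simpa [c, hq] using hQA_s q hq
    · simpa [c, hq] using hQA_u q (hU_of_notMem_S q hq)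
  · intro j
    by_cases hq : p j ∈ S
    · have hτ : τf (p j) ≤ d (j + 1) := by simpa using hdS (j + 1) (by omega) (by simpa using hq)
      simp only [c, b, if_pos hq, neg_mul, neg_le_neg_iff]
      exact mul_le_mul_of_nonneg_left hτ (hlamf _ hq).le
    · have hU := hU_of_notMem_S _ hq
      have hη : d (j + 1) ≤ ηf (p j) := by simpa using hdU (j + 1) (by omega) (by simpa using hU)
      simp only [c, b, if_neg hq]
      exact mul_le_mul_of_nonneg_left hη (hmuf _ hU).le
  · convert Real.bddAbove_range_of_limsup_neg hlimsup using 3 with j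
    rw [Finset.sum_add_distrib, Finset.sum_const, Finset.card_range, nsmul_eq_mul,
      ← neg_sum_add_sum_mul_card_filter_eq hSU hdisj (fun q => lamf q * τf q)
        (fun q => muf q * ηf q) p j]
    simp only [mul_right_comm _ _ (τf _), mul_right_comm _ _ (ηf _)]

/-- Mode-dependent MLF criterion for reset switched systems with both stable and unstable
modes: under the Lyapunov inequalities with rates `λ_p`, `μ_p` and reset gains `γ_{(q,p)}`,
and the limsup condition
`limsup_j (−Σ_{p∈𝔰} λ_p N^p(j) τ_p + Σ_{p∈𝔲} μ_p N^p(j) η_p + j ln γ) < 0` along a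
switching signal with mode-dependent dwell times `(τ_p)` and flee times `(η_p)`, the reset
switched system is stable along this signal. -/
theorem reset_system_stable_of_MLF_mode_dependent_mixed {n : ℕ} {P : Type*}
    [Fintype P] [DecidableEq P]
    (S U : Finset P) (hSU : S ∪ U = Finset.univ) (hdisj : Disjoint S U)
    (A : P → Matrix (Fin n) (Fin n) ℝ)
    (R : P → P → Matrix (Fin n) (Fin n) ℝ)
    (Q : P → Matrix (Fin n) (Fin n) ℝ) (hQ : ∀ p, (Q p).PosDef)
    (lamf muf : P → ℝ) (γf : P → P → ℝ)
    (hlamf : ∀ p ∈ S, 0 < lamf p) (hmuf : ∀ p ∈ U, 0 < muf p)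
    (hγf : ∀ p q, 0 < γf p q)
    (hQA_s : ∀ p ∈ S, ((-(lamf p)) • Q p - (Q p * A p + (A p)ᵀ * Q p)).PosSemidef)
    (hQA_u : ∀ p ∈ U, ((muf p) • Q p - (Q p * A p + (A p)ᵀ * Q p)).PosSemidef)
    (hR : ∀ p q, (γf q p • Q q - (R q p)ᵀ * Q p * R q p).PosSemidef)
    (γ : ℝ)
    (hγ_ub : ∀ p q, γf q p ≤ γ) (hγ_mem : ∃ p q, γ = γf q p)
    (τf ηf : P → ℝ) (hτf : ∀ p ∈ S, 0 < τf p) (hηf : ∀ p ∈ U, 0 < ηf p)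
    (p : ℕ → P) (d : ℕ → ℝ)
    (hd : ∀ k, 1 ≤ k → 0 < d k)
    (hdS : ∀ k, 1 ≤ k → p (k - 1) ∈ S → τf (p (k - 1)) ≤ d k)
    (hdU : ∀ k, 1 ≤ k → p (k - 1) ∈ U → d k ≤ ηf (p (k - 1)))
    (hlimsup : Filter.limsup (fun j : ℕ =>
        -(∑ q ∈ S, lamf q * (((Finset.range j).filter fun i => p i = q).card : ℝ) * τf q) +
          (∑ q ∈ U, muf q * (((Finset.range j).filter fun i => p i = q).card : ℝ) * ηf q) +
          (j : ℝ) * Real.log γ) Filter.atTop < 0) :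
    ∃ C > (0 : ℝ), ∀ (j : ℕ) (s : ℝ), 0 ≤ s → s ≤ d (j + 1) →
      ‖exp (s • A (p j)) * resetTransition A R p d j‖ ≤ C :=
  reset_system_stable_of_MLF_mode_dependent_mixed_general S U hSU hdisj A R Q hQ lamf muf γf hlamf
    hmuf hγf hQA_s hQA_u hR γ hγ_ub τf ηf p d hd hdS hdU hlimsup
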